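/- For all integers r ≥ 0, q ≥ 1, n ≥ q + r, and every geometric-line-free set A ⊆ [3]^n, one has 2·α_r(A) + α_{r+q}(A) ≤ 2, where α_j(A) = |A ∩ T_j| / |T_j| and T_j is the set of words in [3]^n with exactly j coordinates equal to 2. -/

import Mathlib

/-- The cube \`[3]^n = {1,2,3}^n\`, viewed inside \`ℤ^n\`. -/
def cube (n : ℕ) : Finset (Fin n → ℤ) :=
  Fintype.piFinset fun _ => ({1, 2, 3} : Finset ℤ)

/-- A Moser set: a set containing no geometric line \`{a, a+r, a+2r}\` with \`r ≠ 0\`. -/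
def MoserFree {n : ℕ} (A : Finset (Fin n → ℤ)) : Prop :=
  ¬ ∃ a r : Fin n → ℤ, r ≠ 0 ∧ a ∈ A ∧ a + r ∈ A ∧ a + r + r ∈ A

/-- The density \`α_j(A)\`: the fraction of the set of words of \`[3]^n\` with exactly \`j\`
coordinates equal to 2 (a set of size \`C(n,j)·2^(n-j)\`) that belongs to \`A\`. -/
noncomputable def density (n : ℕ) (A : Finset (Fin n → ℤ)) (j : ℕ) : ℝ :=
  ((A.filter fun x => (Finset.univ.filter fun t => x t = (2 : ℤ)).card = j).card : ℝ) /
    ((n.choose j : ℝ) * 2 ^ (n - j))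

/-!
Fix a centre `c ∈ T_{r+q}` and look at the points `e ∈ T_r` of the `(r+q)`-dimensional geometric
subspace centred at `c` (replace some `q` of the `2`s of `c` by `1` or `3`); there are
`N = C(r+q, r)·2^q` of them. If `c ∈ A`, then `e ↦ 2c - e` pairs them into geometric lines
through `c`, so `A` contains at most half of them. Summing over `c ∈ T_{r+q}`, and counting the
incidences from the other side (each `e ∈ T_r` lies in the subspaces of `C(n-r, q)` centres), gives
`2·C(n-r,q)·|A ∩ T_r| + N·|A ∩ T_{r+q}| ≤ 2N·|T_{r+q}|`, which is the claim after normalising.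
-/

open Finset

lemma Finset.two_mul_card_inter_le_card {α : Type*} [DecidableEq α] {s A : Finset α}
    (f : α → α) (hf : Set.InjOn f ↑(s ∩ A)) (hmaps : Set.MapsTo f ↑(s ∩ A) ↑(s \ A)) :
    2 * #(s ∩ A) ≤ #s := by
  have := card_le_card_of_injOn f hmaps hf
  have := card_sdiff_add_card_inter s A
  omega

lemma two_mul_div_add_div_le_two {𝕜 : Type*} [Field 𝕜] [LinearOrder 𝕜] [IsStrictOrderedRing 𝕜]
    {a b K N m₁ m₂ : 𝕜} (ha : 0 < a) (hb : 0 < b) (hN : 0 < N) (hpairs : a * K = b * N)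
    (h : 2 * (m₁ * K) + m₂ * N ≤ b * (2 * N)) : 2 * (m₁ / a) + m₂ / b ≤ 2 := by
  rw [← mul_le_mul_iff_of_pos_right (by positivity : 0 < a * b * N)]
  calc (2 * (m₁ / a) + m₂ / b) * (a * b * N) = 2 * m₁ * (b * N) + a * (m₂ * N) := by
        field_simp
    _ = a * (2 * (m₁ * K) + m₂ * N) := by rw [← hpairs]; ring
    _ ≤ a * (b * (2 * N)) := by gcongr
    _ = 2 * (a * b * N) := by ring

section

variable {n : ℕ}

def twos (x : Fin n → ℤ) : Finset (Fin n) := univ.filter fun t => x t = 2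

def layer (n j : ℕ) : Finset (Fin n → ℤ) := (cube n).filter fun x => #(twos x) = j

/-- The geometric subspace of `[3]^n` centred at `c`: its free coordinates are those where
`c` is `2`. -/
def subcube (c : Fin n → ℤ) : Finset (Fin n → ℤ) :=
  (cube n).filter fun e => ∀ i, c i ≠ 2 → e i = c i

@[simp] lemma mem_twos {x : Fin n → ℤ} {i : Fin n} : i ∈ twos x ↔ x i = 2 := by
  simp [twos]

lemma mem_cube {x : Fin n → ℤ} : x ∈ cube n ↔ ∀ i, x i = 1 ∨ x i = 2 ∨ x i = 3 := by
  simp [cube, Fintype.mem_piFinset]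

lemma mem_layer {x : Fin n → ℤ} {j : ℕ} : x ∈ layer n j ↔ x ∈ cube n ∧ #(twos x) = j :=
  mem_filter

lemma mem_subcube {c e : Fin n → ℤ} : e ∈ subcube c ↔ e ∈ cube n ∧ ∀ i, c i ≠ 2 → e i = c i :=
  mem_filter

lemma twos_subset_twos_of_mem_subcube {c e : Fin n → ℤ} (he : e ∈ subcube c) :
    twos e ⊆ twos c := fun i hi => by
  by_contra h
  simp_all [mem_subcube]

lemma filter_subcube_twos_eq_piFinset {c : Fin n → ℤ} (hc : c ∈ cube n) {S : Finset (Fin n)}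
    (hS : S ⊆ twos c) :
    (subcube c).filter (twos · = S) =
      Fintype.piFinset fun i => if i ∈ S then {2} else if c i = 2 then {1, 3} else {c i} := by
  ext e
  simp only [mem_filter, mem_subcube, mem_cube, Fintype.mem_piFinset, Finset.ext_iff, mem_twos,
    ← forall_and]
  refine forall_congr' fun i => ?_
  have hci := mem_cube.1 hc i
  have hSi : i ∈ S → c i = 2 := fun h => mem_twos.1 (hS h)
  split_ifs with h1 h2 <;> simp_all <;> omega

lemma card_filter_subcube_twos_eq {c : Fin n → ℤ} (hc : c ∈ cube n) {S : Finset (Fin n)}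
    (hS : S ⊆ twos c) : #((subcube c).filter (twos · = S)) = 2 ^ #(twos c \ S) := by
  rw [filter_subcube_twos_eq_piFinset hc hS, Fintype.card_piFinset, ← prod_const (2 : ℕ),
    ← Fintype.prod_ite_mem (twos c \ S)]
  refine Fintype.prod_congr _ _ fun i => ?_
  by_cases h1 : i ∈ S
  · simp [h1]
  · by_cases h2 : c i = 2 <;> simp [h1, h2]

lemma card_subcube_inter_layer {c : Fin n → ℤ} (hc : c ∈ cube n) (k : ℕ) :
    #(subcube c ∩ layer n k) = (#(twos c)).choose k * 2 ^ (#(twos c) - k) := by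
  have hmaps : Set.MapsTo twos ((subcube c ∩ layer n k : Finset _) : Set (Fin n → ℤ))
      ((twos c).powersetCard k : Set (Finset (Fin n))) := by
    intro e he
    simp only [coe_inter, Set.mem_inter_iff, mem_coe, mem_layer] at he
    simpa [mem_powersetCard] using ⟨twos_subset_twos_of_mem_subcube he.1, he.2.2⟩
  rw [card_eq_sum_card_fiberwise hmaps, ← card_powersetCard, card_eq_sum_ones, sum_mul, one_mul]
  refine sum_congr rfl fun S hS => ?_
  obtain ⟨hSc, rfl⟩ := mem_powersetCard.1 hS
  rw [← card_sdiff_of_subset hSc, ← card_filter_subcube_twos_eq hc hSc]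
  congr 1
  ext e
  simp only [mem_filter, mem_inter, mem_layer, mem_subcube]
  constructor
  · rintro ⟨⟨h, -⟩, rfl⟩; exact ⟨h, rfl⟩
  · rintro ⟨h, rfl⟩; exact ⟨⟨h, h.1, rfl⟩, rfl⟩

lemma card_layer (j : ℕ) : #(layer n j) = n.choose j * 2 ^ (n - j) := by
  have hcube : (fun _ => 2 : Fin n → ℤ) ∈ cube n := mem_cube.2 fun _ => by simp
  have htwos : twos (fun _ => 2 : Fin n → ℤ) = univ := by ext; simp
  have hlayer : subcube (fun _ => 2) ∩ layer n j = layer n j := by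
    ext x; simp [mem_subcube, mem_layer]
  rw [← hlayer, card_subcube_inter_layer hcube, htwos, card_univ, Fintype.card_fin]

lemma card_filter_mem_subcube {r : ℕ} {e : Fin n → ℤ} (he : e ∈ layer n r) (q : ℕ) :
    #((layer n (r + q)).filter (e ∈ subcube ·)) = (n - r).choose q := by
  obtain ⟨hcube, rfl⟩ := mem_layer.1 he
  have hcompl : #(twos e)ᶜ = n - #(twos e) := by simp [card_compl]
  rw [← hcompl, ← card_powersetCard]
  refine card_nbij' (fun c => twos c \ twos e) (fun S i => if i ∈ S then 2 else e i)
    (fun c hc => ?_) (fun S hS => ?_) (fun c hc => ?_) (fun S hS => ?_)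
  · simp only [mem_coe, mem_filter, mem_layer, mem_powersetCard] at hc ⊢
    obtain ⟨⟨-, hcard⟩, hec⟩ := hc
    have hsub := twos_subset_twos_of_mem_subcube hec
    refine ⟨fun i hi => ?_, ?_⟩
    · simp_all
    · rw [card_sdiff_of_subset hsub, hcard]; omega
  · simp only [mem_coe, mem_powersetCard] at hS
    obtain ⟨hSc, hScard⟩ := hS
    have htwos : twos (fun i => if i ∈ S then 2 else e i) = twos e ∪ S := by
      ext i; by_cases h : i ∈ S <;> simp [h]
    simp only [mem_coe, mem_filter, mem_layer, mem_subcube, mem_cube]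
    refine ⟨⟨fun i => ?_, ?_⟩, ?_, fun i => ?_⟩
    · by_cases h : i ∈ S <;> simp [h, mem_cube.1 hcube i]
    · rw [htwos, card_union_of_disjoint (disjoint_left.2 fun i hi hiS => ?_), hScard]
      simpa [hi] using hSc hiS
    · exact mem_cube.1 hcube
    · by_cases h : i ∈ S <;> simp [h]
  · simp only [mem_coe, mem_filter, mem_layer, mem_subcube] at hc
    obtain ⟨-, -, hec⟩ := hc
    funext i
    by_cases h : c i = 2 <;> simp_all
  · simp only [mem_coe, mem_powersetCard] at hS
    ext i
    by_cases h : i ∈ S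
    · simpa [h] using hS.1 h
    · simp [h]

lemma reflect_mem_subcube {c e : Fin n → ℤ} (he : e ∈ subcube c) : 2 • c - e ∈ subcube c := by
  rw [mem_subcube, mem_cube] at he ⊢
  refine ⟨fun i => ?_, fun i hi => ?_⟩ <;> have := he.1 i <;> have := he.2 i <;>
    by_cases h : c i = 2 <;> simp only [Pi.sub_apply, nsmul_eq_mul, Pi.mul_apply, Nat.cast_ofNat,
      Pi.ofNat_apply] at * <;> omega

lemma twos_reflect {c e : Fin n → ℤ} (he : e ∈ subcube c) : twos (2 • c - e) = twos e := by
  ext i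
  have := (mem_subcube.1 he).2 i
  by_cases h : c i = 2 <;> simp_all <;> omega

/-- A Moser set containing the centre `c` misses one point of each pair `{e, 2c - e}`. -/
lemma two_mul_card_subcube_inter_layer_inter_le {A : Finset (Fin n → ℤ)} (hA : MoserFree A)
    {c : Fin n → ℤ} (hc : c ∈ A) {k : ℕ} (hk : k ≠ #(twos c)) :
    2 * #(subcube c ∩ layer n k ∩ A) ≤ #(subcube c ∩ layer n k) := by
  refine two_mul_card_inter_le_card (2 • c - ·) sub_right_injective.injOn fun e he => ?_
  simp only [coe_inter, Set.mem_inter_iff, mem_coe, mem_layer] at he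
  obtain ⟨⟨hsub, hcube, rfl⟩, heA⟩ := he
  have hce : c - e ≠ 0 := sub_ne_zero.2 fun h => hk (by rw [h])
  simp only [coe_sdiff, coe_inter, Set.mem_sdiff, Set.mem_inter_iff, mem_coe, mem_layer]
  refine ⟨⟨reflect_mem_subcube hsub, (mem_subcube.1 (reflect_mem_subcube hsub)).1,
    by rw [twos_reflect hsub]⟩, fun hreflect => hA ⟨e, c - e, hce, heA, ?_, ?_⟩⟩
  · rwa [add_sub_cancel]
  · rwa [show e + (c - e) + (c - e) = 2 • c - e by abel]

lemma sum_card_subcube_inter_layer_inter (A : Finset (Fin n → ℤ)) (r q : ℕ) :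
    ∑ c ∈ layer n (r + q), #(subcube c ∩ layer n r ∩ A) = #(layer n r ∩ A) * (n - r).choose q := by
  have hbelow : ∀ c,
      subcube c ∩ layer n r ∩ A = (layer n r ∩ A).bipartiteBelow (· ∈ subcube ·) c := by
    intro c; ext e; simp only [mem_inter, mem_bipartiteBelow]; tauto
  simp_rw [hbelow]
  rw [← sum_card_bipartiteAbove_eq_sum_card_bipartiteBelow, ← smul_eq_mul, ← sum_const]
  exact sum_congr rfl fun e he => card_filter_mem_subcube (mem_inter.1 he).1 q

lemma card_subcube_inter_layer_of_mem_layer {r q : ℕ} {c : Fin n → ℤ} (hc : c ∈ layer n (r + q)) :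
    #(subcube c ∩ layer n r) = (r + q).choose r * 2 ^ q := by
  rw [card_subcube_inter_layer (mem_layer.1 hc).1, (mem_layer.1 hc).2, Nat.add_sub_cancel_left]

lemma card_layer_mul_choose (r q : ℕ) :
    #(layer n r) * (n - r).choose q = #(layer n (r + q)) * ((r + q).choose r * 2 ^ q) := by
  have hlayer : ∀ j, layer n j ∩ cube n = layer n j := fun j => inter_eq_left.2 (filter_subset _ _)
  rw [← hlayer, ← sum_card_subcube_inter_layer_inter, ← smul_eq_mul, ← sum_const]
  refine sum_congr rfl fun c hc => ?_
  rw [inter_assoc, hlayer, card_subcube_inter_layer_of_mem_layer hc]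

lemma density_eq_card_div {A : Finset (Fin n → ℤ)} (hA : A ⊆ cube n) (j : ℕ) :
    density n A j = #(layer n j ∩ A) / #(layer n j) := by
  rw [density, card_layer]
  push_cast
  congr 3
  ext x
  simp only [mem_filter, mem_inter, mem_layer, twos]
  exact ⟨fun h => ⟨⟨hA h.1, h.2⟩, h.1⟩, fun h => ⟨h.2, h.1.2⟩⟩

end

/-- For all `r ≥ 0`, `q ≥ 1`, `n ≥ q + r` and every Moser set `A ⊆ [3]^n`:
`2·α_r(A) + α_{r+q}(A) ≤ 2`. -/
theorem two_alpha_inequality (r q n : ℕ) (hq : 1 ≤ q) (hn : q + r ≤ n)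
    (A : Finset (Fin n → ℤ)) (hA : A ⊆ cube n) (hm : MoserFree A) :
    2 * density n A r + density n A (r + q) ≤ 2 := by
  set N := (r + q).choose r * 2 ^ q with hN
  have hcenter : ∀ c ∈ layer n (r + q),
      2 * #(subcube c ∩ layer n r ∩ A) + (if c ∈ A then N else 0) ≤ 2 * N := fun c hc => by
    rw [hN, ← card_subcube_inter_layer_of_mem_layer hc]
    split_ifs with hcA
    · have := two_mul_card_subcube_inter_layer_inter_le hm hcA (k := r)
        (by rw [(mem_layer.1 hc).2]; omega)
      omega
    · simpa using card_le_card (inter_subset_left (s₁ := subcube c ∩ layer n r) (s₂ := A))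
  have hsum := sum_le_sum hcenter
  rw [sum_add_distrib, ← mul_sum, sum_card_subcube_inter_layer_inter, sum_ite_mem, sum_const,
    sum_const, smul_eq_mul, smul_eq_mul] at hsum
  have hpos : ∀ j ≤ n, (0 : ℝ) < #(layer n j) := fun j hj => by
    rw [card_layer]; have := Nat.choose_pos hj; positivity
  rw [density_eq_card_div hA, density_eq_card_div hA]
  exact two_mul_div_add_div_le_two (K := ((n - r).choose q : ℝ)) (N := (N : ℝ))
    (hpos r (by omega)) (hpos (r + q) (by omega))
    (Nat.cast_pos.2 (mul_pos (Nat.choose_pos (by omega)) (by positivity)))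
    (by exact_mod_cast card_layer_mul_choose r q) (by exact_mod_cast hsum)
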